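/- arXiv:2506.06234 — 4 statements merged into one kernel-verified Lean document; each statement's English description precedes it below -/
import Mathlib

section
/- For the 2x2 matrix A with entries A11 = (Jee - 1)/τE, A12 = Jei/τE, A21 = Jie/τI, A22 = (Jii - 1)/τI, where Jee > 1, Jii < 0, Jei < 0, Jie > 0, and (Jee - 1)(Jii - 1) - Jei·Jie > 0, both eigenvalues of A have negative real part if and only if τI/τE < -(Jii - 1)/(Jee - 1). -/
open Matrix Polynomial

lemma charpoly_eval_aux (a b c d : ℂ) (z : ℂ) :
    eval z (!![a, b; c, d] : Matrix (Fin 2) (Fin 2) ℂ).charpoly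
      = (z - a) * (z - d) - b * c := by
  have h : charmatrix (!![a, b; c, d] : Matrix (Fin 2) (Fin 2) ℂ)
      = !![X - C a, -C b; -C c, X - C d] := by
    ext i j
    fin_cases i <;> fin_cases j <;>
      simp [charmatrix_apply_eq, charmatrix_apply_ne]
  rw [Matrix.charpoly, h, Matrix.det_fin_two_of]
  simp [mul_comm]

lemma quad_neg_aux (T D : ℝ) (hD : 0 < D) :
    (∀ z : ℂ, z ^ 2 - (T : ℂ) * z + (D : ℂ) = 0 → z.re < 0) ↔ T < 0 := by
  constructor
  · intro h
    by_contra hT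
    push_neg at hT
    by_cases hle : D ≤ T ^ 2 / 4
    · set w : ℂ := ((Real.sqrt (T ^ 2 / 4 - D) : ℝ) : ℂ)
      have hw : w ^ 2 = ((T ^ 2 / 4 - D : ℝ) : ℂ) := by
        rw [show w ^ 2 = ((Real.sqrt (T ^ 2 / 4 - D) ^ 2 : ℝ) : ℂ) by push_cast; ring]
        rw [Real.sq_sqrt (by linarith)]
      have hroot : ((T / 2 : ℝ) + w) ^ 2 - (T : ℂ) * ((T / 2 : ℝ) + w) + (D : ℂ) = 0 := by
        rw [add_sq, hw]; push_cast; ring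
      have := h _ hroot
      simp [w] at this
      nlinarith [Real.sqrt_nonneg (T ^ 2 / 4 - D)]
    · push_neg at hle
      set w : ℂ := ((Real.sqrt (D - T ^ 2 / 4) : ℝ) : ℂ) * Complex.I
      have hw : w ^ 2 = ((T ^ 2 / 4 - D : ℝ) : ℂ) := by
        have : w ^ 2 = ((Real.sqrt (D - T ^ 2 / 4) ^ 2 : ℝ) : ℂ) * (Complex.I ^ 2) := by
          push_cast [w]; ring
        rw [this, Complex.I_sq, Real.sq_sqrt (by linarith)]
        push_cast; ring
      have hroot : ((T / 2 : ℝ) + w) ^ 2 - (T : ℂ) * ((T / 2 : ℝ) + w) + (D : ℂ) = 0 := by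
        rw [add_sq, hw]; push_cast; ring
      have := h _ hroot
      simp [w] at this
      linarith
  · intro hT z hz
    have h := hz
    rw [Complex.ext_iff] at h
    simp [pow_two, Complex.mul_re, Complex.mul_im] at h
    obtain ⟨h1, h2⟩ := h
    rcases eq_or_ne z.im 0 with hy | hy
    · rw [hy] at h1
      nlinarith [sq_nonneg z.re]
    · have : z.im * (2 * z.re - T) = 0 := by linarith
      rcases mul_eq_zero.1 this with h | h
      · exact absurd h hy
      · nlinarith

/-- Both eigenvalues of the 2x2 Jacobian of the linearized E-I rate model have
negative real part iff τI/τE < -(Jii-1)/(Jee-1). -/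
theorem stmt0 (τE τI Jee Jei Jie Jii : ℝ)
    (hτE : 0 < τE) (hτI : 0 < τI)
    (hJee : 1 < Jee) (hJii : Jii < 0) (hJei : Jei < 0) (hJie : 0 < Jie)
    (hC : 0 < (Jee - 1) * (Jii - 1) - Jei * Jie) :
    (∀ z : ℂ,
        (((!![(Jee - 1)/τE, Jei/τE; Jie/τI, (Jii - 1)/τI] :
            Matrix (Fin 2) (Fin 2) ℝ).map Complex.ofReal).charpoly).IsRoot z →
          z.re < 0) ↔
      τI / τE < -(Jii - 1) / (Jee - 1) := by
  set a : ℝ := (Jee - 1) / τE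
  set b : ℝ := Jei / τE
  set c : ℝ := Jie / τI
  set d : ℝ := (Jii - 1) / τI
  have hmap : ((!![a, b; c, d] : Matrix (Fin 2) (Fin 2) ℝ).map Complex.ofReal)
      = !![(a : ℂ), (b : ℂ); (c : ℂ), (d : ℂ)] := by
    ext i j
    fin_cases i <;> fin_cases j <;> simp
  set T : ℝ := a + d
  set D : ℝ := a * d - b * c
  have hD : 0 < D := by
    have : D = ((Jee - 1) * (Jii - 1) - Jei * Jie) / (τE * τI) := by
      simp only [D, a, b, c, d]
      field_simp
    rw [this]
    exact div_pos hC (mul_pos hτE hτI)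
  have hroot : ∀ z : ℂ,
      (((!![a, b; c, d] : Matrix (Fin 2) (Fin 2) ℝ).map Complex.ofReal).charpoly).IsRoot z ↔
        z ^ 2 - (T : ℂ) * z + (D : ℂ) = 0 := by
    intro z
    rw [Polynomial.IsRoot, hmap, charpoly_eval_aux]
    constructor <;> intro h <;> rw [← h] <;> push_cast [T, D] <;> ring
  have key : (∀ z : ℂ,
      (((!![a, b; c, d] : Matrix (Fin 2) (Fin 2) ℝ).map Complex.ofReal).charpoly).IsRoot z →
        z.re < 0) ↔ T < 0 := by
    rw [← quad_neg_aux T D hD]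
    exact forall_congr' fun z => by rw [hroot z]
  rw [key]
  have hT : T = (Jee - 1) / τE + (Jii - 1) / τI := rfl
  rw [hT, div_lt_div_iff₀ hτE (by linarith : (0:ℝ) < Jee - 1)]
  constructor <;> intro h
  · have h' : (Jee - 1) * τI + (Jii - 1) * τE < 0 := by
      have := mul_pos hτE hτI
      have h2 : ((Jee - 1) / τE + (Jii - 1) / τI) * (τE * τI) < 0 :=
        mul_neg_of_neg_of_pos h this
      calc (Jee - 1) * τI + (Jii - 1) * τE
          = ((Jee - 1) / τE + (Jii - 1) / τI) * (τE * τI) := by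
            field_simp
        _ < 0 := h2
    nlinarith
  · have h' : (Jee - 1) * τI + (Jii - 1) * τE < 0 := by nlinarith
    have h2 : ((Jee - 1) / τE + (Jii - 1) / τI) * (τE * τI)  < 0 := by
      calc ((Jee - 1) / τE + (Jii - 1) / τI) * (τE * τI)
          = (Jee - 1) * τI + (Jii - 1) * τE := by field_simp
        _ < 0 := h'
    nlinarith [h2, mul_pos hτE hτI]
end

section
/- Let J be an invertible n×n real matrix, f : ℝⁿ → ℝⁿ a continuous map, τ > 0, and b : ℝ → ℝⁿ continuous. If x : ℝ → ℝⁿ and c : ℝ → ℝⁿ satisfy τ ẋ = -x + f(J x + c) and τ ċ = -c + b, then v := J x + c satisfies τ v̇ = -v + J f(v) + b. -/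
theorem HasDerivAt.matrix_mulVec {𝕜 m n : Type*} [NontriviallyNormedField 𝕜] [CompleteSpace 𝕜]
    [Fintype m] [Fintype n] (A : Matrix m n 𝕜) {x : 𝕜 → n → 𝕜} {x' : n → 𝕜} {t : 𝕜}
    (hx : HasDerivAt x x' t) : HasDerivAt (fun s => A.mulVec (x s)) (A.mulVec x') t :=
  (Matrix.mulVecLin A).toContinuousLinearMap.hasFDerivAt.comp_hasDerivAt t hx

theorem stmt3_general {n : ℕ} (J : Matrix (Fin n) (Fin n) ℝ)
    (f : (Fin n → ℝ) → (Fin n → ℝ))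
    (τ : ℝ) (b : ℝ → (Fin n → ℝ))
    (x c : ℝ → (Fin n → ℝ))
    (hx : ∀ t, HasDerivAt x (τ⁻¹ • (-(x t) + f (J.mulVec (x t) + c t))) t)
    (hc : ∀ t, HasDerivAt c (τ⁻¹ • (-(c t) + b t)) t) :
    ∀ t, HasDerivAt (fun s => J.mulVec (x s) + c s)
      (τ⁻¹ • (-(J.mulVec (x t) + c t) + J.mulVec (f (J.mulVec (x t) + c t)) + b t)) t := by
  intro t
  refine ((HasDerivAt.matrix_mulVec J (hx t)).fun_add (hc t)).congr_deriv ?_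
  rw [Matrix.mulVec_smul, ← smul_add, Matrix.mulVec_add, Matrix.mulVec_neg]
  congr 1
  abel

/-- Miller–Fumarola equivalence: if x solves the rate model and c is a low-pass
filter of b, then v = Jx + c solves the voltage model. -/
theorem stmt3 {n : ℕ} (J : Matrix (Fin n) (Fin n) ℝ) (hJ : IsUnit J)
    (f : (Fin n → ℝ) → (Fin n → ℝ)) (hf : Continuous f)
    (τ : ℝ) (hτ : 0 < τ) (b : ℝ → (Fin n → ℝ)) (hb : Continuous b)
    (x c : ℝ → (Fin n → ℝ))
    (hx : ∀ t, HasDerivAt x (τ⁻¹ • (-(x t) + f (J.mulVec (x t) + c t))) t)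
    (hc : ∀ t, HasDerivAt c (τ⁻¹ • (-(c t) + b t)) t) :
    ∀ t, HasDerivAt (fun s => J.mulVec (x s) + c s)
      (τ⁻¹ • (-(J.mulVec (x t) + c t) + J.mulVec (f (J.mulVec (x t) + c t)) + b t)) t :=
  stmt3_general J f τ b x c hx hc
end

section
/- In a CTLN on a graph G, for a vertex α with singleton support {α}, the point x* with x*_α = b and x*_β = 0 for β ≠ α is a fixed point of the CTLN dynamics if and only if for every β ≠ α, W_{βα}·b + b ≤ 0, equivalently W_{βα} ≤ -1, equivalently α → β is not an edge of G. -/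
open scoped BigOperators

/-- The point with x_α = b and all other coordinates zero is a fixed point of
the CTLN iff α has no outgoing edges (the singleton {α} is target-free). -/
theorem stmt14 {n : ℕ} (G : Fin n → Fin n → Prop) [∀ a b, Decidable (G a b)]
    (ε δ b : ℝ) (hε : 0 < ε) (hε1 : ε < 1) (hδ : 0 < δ) (hb : 0 < b)
    (α : Fin n) :
    (∀ γ, -(if γ = α then b else 0) +
        max (∑ η, (if γ = η then 0 else if G η γ then -1 + ε else -1 - δ) *
          (if η = α then b else 0) + b) 0 = 0)
      ↔ (∀ β, β ≠ α → ¬ G α β) := by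
  have hsum : ∀ γ, (∑ η, (if γ = η then 0 else if G η γ then -1 + ε else -1 - δ) *
      (if η = α then b else 0)) =
      (if γ = α then 0 else if G α γ then -1 + ε else -1 - δ) * b := by
    intro γ
    rw [Finset.sum_eq_single α]
    · simp
    · intro c _ hc; simp [hc]
    · simp
  constructor
  · intro h β hβ hG
    have := h β
    rw [hsum] at this
    simp [hβ, hG] at this
    nlinarith
  · intro h γ
    rw [hsum]
    by_cases hγ : γ = α
    · simp only [hγ, if_true, eq_self_iff_true, zero_mul, zero_add]
      rw [max_eq_left hb.le]; ring
    · have hG : ¬ G α γ := h γ hγ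
      simp only [hγ, if_false, hG]
      have : (-1 - δ) * b + b ≤ 0 := by nlinarith
      rw [max_eq_right this]
      simp
end

section
/- A graph on n vertices can have at most 3^{n/3} maximal cliques (Moon–Moser bound); consequently, the number of stable fixed points of a symmetric CTLN on n nodes, which are in bijection with maximal cliques of its graph, is at most 3^{n/3}. -/
/-!
Count, for a finite vertex set `U`, the cliques maximal among cliques inside `U`, by strong
induction on `U` (staying inside `U` avoids passing to induced subgraphs on subtypes). Let
`v ∈ U` have the largest number `d` of neighbours in `U`. Every such maximal clique `K` contains
a vertex `w ∈ U` not adjacent to `v` (possibly `v` itself), as otherwise `insert v K` would be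
larger; and the maximal cliques through `w` are `w` inserted into a maximal clique of the
`≤ d` neighbours of `w` in `U`. So the count is at most `(|U| - d) · 3^(d/3)`, which is at most
`3^((|U| - d)/3) · 3^(d/3) = 3^(|U|/3)`.
-/

open Finset

theorem Nat.pow_three_le_three_pow (m : ℕ) : m ^ 3 ≤ 3 ^ m := by
  induction m with
  | zero => decide
  | succ k ih =>
    rcases Nat.lt_or_ge k 3 with hk | hk
    · interval_cases k <;> decide
    · calc (k + 1) ^ 3 ≤ 3 * k ^ 3 := by nlinarith [Nat.mul_le_mul_right (k * k) hk]
        _ ≤ 3 * 3 ^ k := Nat.mul_le_mul_left 3 ih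
        _ = 3 ^ (k + 1) := by ring

-- `x ≤ 3 ^ (x / 3)` fails for real `x` near `e`, hence the detour through `m ^ 3 ≤ 3 ^ m`.
theorem Nat.cast_le_three_rpow_div_three (m : ℕ) : (m : ℝ) ≤ 3 ^ ((m : ℝ) / 3) := by
  have hcube : ((3 : ℝ) ^ ((m : ℝ) / 3)) ^ 3 = 3 ^ m := by
    rw [← Real.rpow_natCast, ← Real.rpow_mul (by norm_num)]
    norm_num
  refine le_of_pow_le_pow_left₀ three_ne_zero (by positivity) ?_
  rw [hcube]
  exact_mod_cast m.pow_three_le_three_pow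

theorem Nat.cast_mul_three_rpow_le (m k : ℕ) :
    (m : ℝ) * 3 ^ ((k : ℝ) / 3) ≤ 3 ^ (((m + k : ℕ) : ℝ) / 3) := by
  rw [Nat.cast_add, add_div, Real.rpow_add (by norm_num)]
  gcongr
  exact m.cast_le_three_rpow_div_three

namespace SimpleGraph

variable {V : Type*} (G : SimpleGraph V)

open scoped Classical in
noncomputable def maximalCliquesIn (U : Finset V) : Finset (Finset V) :=
  {s ∈ U.powerset | Maximal (fun t : Finset V => t ⊆ U ∧ G.IsClique (t : Set V)) s}

variable {G}

theorem mem_maximalCliquesIn {U s : Finset V} :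
    s ∈ G.maximalCliquesIn U ↔ Maximal (fun t => t ⊆ U ∧ G.IsClique (t : Set V)) s := by
  classical
  rw [maximalCliquesIn, mem_filter, mem_powerset, and_iff_right_iff_imp]
  exact fun h => h.prop.1

theorem card_maximalCliquesIn_empty_le : #(G.maximalCliquesIn ∅) ≤ 1 :=
  card_le_one.2 fun s hs t ht => by
    rw [subset_empty.1 (mem_maximalCliquesIn.1 hs).prop.1,
      subset_empty.1 (mem_maximalCliquesIn.1 ht).prop.1]

section

variable [DecidableEq V] [DecidableRel G.Adj]

theorem erase_mem_maximalCliquesIn {U K : Finset V} {w : V} (hK : K ∈ G.maximalCliquesIn U)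
    (hw : w ∈ K) : K.erase w ∈ G.maximalCliquesIn (U.filter (G.Adj w)) := by
  obtain ⟨⟨hKU, hKc⟩, hKmax⟩ := mem_maximalCliquesIn.1 hK
  have hadj : ∀ x ∈ K.erase w, G.Adj w x := fun x hx =>
    hKc hw (mem_of_mem_erase hx) (ne_of_mem_erase hx).symm
  refine mem_maximalCliquesIn.2 ⟨⟨fun x hx => mem_filter.2 ⟨hKU (mem_of_mem_erase hx), hadj x hx⟩,
    hKc.subset (by simp)⟩, fun t ⟨htU, htc⟩ hKt => ?_⟩
  have htw : ∀ x ∈ t, x ∈ U ∧ G.Adj w x := fun x hx => mem_filter.1 (htU hx)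
  have hins : insert w t ⊆ U ∧ G.IsClique ((insert w t : Finset V) : Set V) := by
    refine ⟨insert_subset (hKU hw) fun x hx => (htw x hx).1, ?_⟩
    rw [coe_insert, isClique_insert]
    exact ⟨htc, fun x hx _ => (htw x hx).2⟩
  have hKins : K ⊆ insert w t := by
    rw [← insert_erase hw]
    exact insert_subset_insert w hKt
  intro x hx
  exact mem_erase.2 ⟨fun h => G.irrefl (h ▸ (htw x hx).2), hKmax hins hKins (mem_insert_of_mem hx)⟩

theorem filter_mem_maximalCliquesIn_subset_image (U : Finset V) (w : V) :
    (G.maximalCliquesIn U).filter (w ∈ ·) ⊆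
      (G.maximalCliquesIn (U.filter (G.Adj w))).image (insert w) := by
  intro K hK
  obtain ⟨hK, hw⟩ := mem_filter.1 hK
  exact mem_image.2 ⟨K.erase w, erase_mem_maximalCliquesIn hK hw, insert_erase hw⟩

theorem exists_not_adj_of_mem_maximalCliquesIn {U K : Finset V} {v : V} (hv : v ∈ U)
    (hK : K ∈ G.maximalCliquesIn U) : ∃ w ∈ K, ¬ G.Adj v w := by
  obtain ⟨⟨hKU, hKc⟩, hKmax⟩ := mem_maximalCliquesIn.1 hK
  by_contra! hall
  have hins : insert v K ⊆ U ∧ G.IsClique ((insert v K : Finset V) : Set V) := by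
    refine ⟨insert_subset hv hKU, ?_⟩
    rw [coe_insert, isClique_insert]
    exact ⟨hKc, fun x hx _ => hall x hx⟩
  exact G.irrefl (hall v (hKmax hins (subset_insert v K) (mem_insert_self v K)))

theorem card_maximalCliquesIn_le_sum {U : Finset V} {v : V} (hv : v ∈ U) :
    #(G.maximalCliquesIn U) ≤
      ∑ w ∈ U.filter (¬ G.Adj v ·), #(G.maximalCliquesIn (U.filter (G.Adj w))) := by
  have hcover : G.maximalCliquesIn U ⊆
      (U.filter (¬ G.Adj v ·)).biUnion fun w => (G.maximalCliquesIn U).filter (w ∈ ·) := by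
    intro K hK
    obtain ⟨w, hwK, hvw⟩ := exists_not_adj_of_mem_maximalCliquesIn hv hK
    have hwU : w ∈ U := (mem_maximalCliquesIn.1 hK).prop.1 hwK
    exact mem_biUnion.2 ⟨w, mem_filter.2 ⟨hwU, hvw⟩, mem_filter.2 ⟨hK, hwK⟩⟩
  calc #(G.maximalCliquesIn U)
      ≤ ∑ w ∈ U.filter (¬ G.Adj v ·), #((G.maximalCliquesIn U).filter (w ∈ ·)) :=
        (card_le_card hcover).trans card_biUnion_le
    _ ≤ _ := sum_le_sum fun w _ =>
        (card_le_card (filter_mem_maximalCliquesIn_subset_image U w)).trans card_image_le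

end

theorem card_maximalCliquesIn_le (U : Finset V) :
    (#(G.maximalCliquesIn U) : ℝ) ≤ 3 ^ ((#U : ℝ) / 3) := by
  classical
  induction U using Finset.strongInduction with
  | H U ih =>
  obtain rfl | hU := U.eq_empty_or_nonempty
  · simpa using (Nat.cast_le (α := ℝ)).2 card_maximalCliquesIn_empty_le
  obtain ⟨v, hv, hmax⟩ := U.exists_max_image (fun w => #(U.filter (G.Adj w))) hU
  set d := #(U.filter (G.Adj v))
  have hlink : ∀ w ∈ U, (#(G.maximalCliquesIn (U.filter (G.Adj w))) : ℝ) ≤ 3 ^ ((d : ℝ) / 3) :=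
    fun w hw => (ih _ (filter_ssubset.2 ⟨w, hw, G.irrefl⟩)).trans
      (Real.rpow_le_rpow_of_exponent_le (by norm_num) (by gcongr; exact hmax w hw))
  have hsplit : #(U.filter (¬ G.Adj v ·)) + d = #U := by
    rw [add_comm]
    exact card_filter_add_card_filter_not _
  calc (#(G.maximalCliquesIn U) : ℝ)
      ≤ ∑ w ∈ U.filter (¬ G.Adj v ·), (#(G.maximalCliquesIn (U.filter (G.Adj w))) : ℝ) := by
        exact_mod_cast card_maximalCliquesIn_le_sum hv
    _ ≤ #(U.filter (¬ G.Adj v ·)) * 3 ^ ((d : ℝ) / 3) := by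
        rw [← nsmul_eq_mul]
        exact sum_le_card_nsmul _ _ _ fun w hw => hlink w (mem_filter.1 hw).1
    _ ≤ 3 ^ ((#U : ℝ) / 3) := hsplit ▸ Nat.cast_mul_three_rpow_le _ _

end SimpleGraph

theorem stmt19_general {n : ℕ} (G : SimpleGraph (Fin n))
    (F : Set (Fin n → ℝ))
    (hbij : Nonempty (F ≃ {s : Finset (Fin n) | G.IsClique ↑s ∧
      ∀ t : Finset (Fin n), G.IsClique ↑t → s ⊆ t → s = t})) :
    (({s : Finset (Fin n) | G.IsClique ↑s ∧
        ∀ t : Finset (Fin n), G.IsClique ↑t → s ⊆ t → s = t} :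
          Set (Finset (Fin n))).ncard : ℝ) ≤ (3 : ℝ) ^ ((n : ℝ) / 3) ∧
    (F.ncard : ℝ) ≤ (3 : ℝ) ^ ((n : ℝ) / 3) := by
  set M : Set (Finset (Fin n)) := {s | G.IsClique ↑s ∧
    ∀ t : Finset (Fin n), G.IsClique ↑t → s ⊆ t → s = t}
  have hM : M = G.maximalCliquesIn univ := by
    ext s
    simp [M, SimpleGraph.mem_maximalCliquesIn, maximal_iff]
  have hFM : F.ncard = M.ncard := Nat.card_congr hbij.some
  have hbound : (M.ncard : ℝ) ≤ 3 ^ ((n : ℝ) / 3) := by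
    simpa [hM] using G.card_maximalCliquesIn_le univ
  exact ⟨hbound, hFM ▸ hbound⟩

/-- Moon–Moser bound: a graph on n vertices has at most 3^(n/3) maximal cliques;
hence the stable fixed points of a symmetric CTLN, in bijection with the maximal
cliques of its graph, number at most 3^(n/3). -/
theorem stmt19 {n : ℕ} (G : SimpleGraph (Fin n)) [DecidableRel G.Adj]
    (F : Set (Fin n → ℝ))
    (hbij : Nonempty (F ≃ {s : Finset (Fin n) | G.IsClique ↑s ∧
      ∀ t : Finset (Fin n), G.IsClique ↑t → s ⊆ t → s = t})) :
    (({s : Finset (Fin n) | G.IsClique ↑s ∧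
        ∀ t : Finset (Fin n), G.IsClique ↑t → s ⊆ t → s = t} :
          Set (Finset (Fin n))).ncard : ℝ) ≤ (3 : ℝ) ^ ((n : ℝ) / 3) ∧
    (F.ncard : ℝ) ≤ (3 : ℝ) ^ ((n : ℝ) / 3) :=
  stmt19_general G F hbij
end
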